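/- arXiv:2102.11564 — 2 statements merged into one kernel-verified Lean document; each statement's English description precedes it below -/
import Mathlib

section
/- Let P be the cubic Hermite interpolant on [x_i, x_{i+1}] of the data (f_i, ḟ_i), (f_{i+1}, ḟ_{i+1}), suppose m_i ≠ 0, and set α_i = ḟ_i/m_i and β_i = ḟ_{i+1}/m_i. If α_i ≥ 0, β_i ≥ 0, and either α_i + β_i ≤ 3 or α_i² + α_i(β_i − 6) + (β_i − 3)² < 0, then P is monotone on [x_i, x_{i+1}]: nondecreasing if m_i > 0 and nonincreasing if m_i < 0. -/
/-!
Writing `s = (t - xᵢ)/hᵢ ∈ [0, 1]`, the derivative of the interpolant is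
`P'(t) = mᵢ · (α(1 - s)² + βs² - 2(α + β - 3)s(1 - s))`, a quadratic form in `(1 - s, s)`.
If `α + β ≤ 3` all three coefficients are nonnegative. Otherwise the form is positive
semidefinite, since its discriminant condition `(α + β - 3)² ≤ αβ` is, expanded,
`α² + α(β - 6) + (β - 3)² ≤ 0`. So `P'` has the sign of `mᵢ` on the interval.
-/

/-- The cubic Hermite interpolant on `[xi, xip]` of the data
`(fi, di)`, `(fip, dip)` (values and derivatives at the endpoints). -/
noncomputable def hermite (xi xip fi fip di dip : ℝ) : ℝ → ℝ := fun t =>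
  fi + di * (t - xi)
    + (((fip - fi) / (xip - xi) - di) / (xip - xi)) * (t - xi) ^ 2
    + ((dip + di - 2 * ((fip - fi) / (xip - xi))) / (xip - xi) ^ 2)
        * (t - xi) ^ 2 * (t - xip)

lemma two_mul_mul_le_of_sq_le_mul {a b k : ℝ} (ha : 0 ≤ a) (hb : 0 ≤ b) (hk : k ^ 2 ≤ a * b)
    (u s : ℝ) : 2 * k * u * s ≤ a * u ^ 2 + b * s ^ 2 := by
  -- `(a + b) · (a u² + b s² - 2kus) = (au - ks)² + (bs - ku)² + (ab - k²)(u² + s²)`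
  rcases (add_nonneg ha hb).eq_or_lt with hab | hab
  · obtain ⟨rfl, rfl⟩ : a = 0 ∧ b = 0 := ⟨by linarith, by linarith⟩
    obtain rfl : k = 0 := by simpa using hk
    simp
  · refine le_of_mul_le_mul_left ?_ hab
    nlinarith [sq_nonneg (a * u - k * s), sq_nonneg (b * s - k * u),
      mul_nonneg (sub_nonneg.2 hk) (add_nonneg (sq_nonneg u) (sq_nonneg s))]

lemma fritschCarlson_form_nonneg {a b s : ℝ} (ha : 0 ≤ a) (hb : 0 ≤ b) (hs₀ : 0 ≤ s)
    (hs₁ : s ≤ 1) (hcond : a + b ≤ 3 ∨ a ^ 2 + a * (b - 6) + (b - 3) ^ 2 < 0) :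
    0 ≤ a * (1 - s) ^ 2 + b * s ^ 2 - 2 * (a + b - 3) * s * (1 - s) := by
  rcases le_or_gt (a + b) 3 with hle | hgt
  · have : 0 ≤ s * (1 - s) := mul_nonneg hs₀ (sub_nonneg.2 hs₁)
    nlinarith [mul_nonneg ha (sq_nonneg (1 - s)), mul_nonneg hb (sq_nonneg s)]
  · have hdisc : (a + b - 3) ^ 2 ≤ b * a := by
      rcases hcond with h | h
      · linarith
      · nlinarith
    nlinarith [two_mul_mul_le_of_sq_le_mul hb ha hdisc s (1 - s)]

lemma hasDerivAt_hermite {xi xip : ℝ} (hx : xip ≠ xi) (fi fip di dip t : ℝ) :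
    HasDerivAt (hermite xi xip fi fip di dip)
      (di * (1 - (t - xi) / (xip - xi)) ^ 2 + dip * ((t - xi) / (xip - xi)) ^ 2
        + 2 * (3 * ((fip - fi) / (xip - xi)) - di - dip)
          * ((t - xi) / (xip - xi)) * (1 - (t - xi) / (xip - xi))) t := by
  have h₁ : HasDerivAt (fun u : ℝ => u - xi) 1 t := (hasDerivAt_id t).sub_const xi
  have h₂ : HasDerivAt (fun u : ℝ => u - xip) 1 t := (hasDerivAt_id t).sub_const xip
  have hsq : HasDerivAt (fun u : ℝ => (u - xi) ^ 2) (2 * (t - xi)) t := by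
    simpa using h₁.fun_pow 2
  have H := (((hasDerivAt_const t fi).add (h₁.const_mul di)).add
      (hsq.const_mul (((fip - fi) / (xip - xi) - di) / (xip - xi)))).add
      ((hsq.const_mul ((dip + di - 2 * ((fip - fi) / (xip - xi))) / (xip - xi) ^ 2)).mul h₂)
  refine H.congr_deriv ?_
  field_simp [sub_ne_zero.2 hx]
  ring

/-- Fritsch–Carlson sufficient conditions for monotonicity of a cubic Hermite
interpolant: with `α = ḟᵢ/mᵢ ≥ 0`, `β = ḟᵢ₊₁/mᵢ ≥ 0`, if `α + β ≤ 3` or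
`α² + α(β − 6) + (β − 3)² < 0`, the interpolant is monotone on `[xᵢ, xᵢ₊₁]`. -/
theorem hermite_monotone_fritsch_carlson (xi xip fi fip di dip m : ℝ) (hx : xi < xip)
    (hm : m = (fip - fi) / (xip - xi)) (hm0 : m ≠ 0)
    (hα0 : 0 ≤ di / m) (hβ0 : 0 ≤ dip / m)
    (hcond : di / m + dip / m ≤ 3 ∨
      (di / m) ^ 2 + (di / m) * (dip / m - 6) + (dip / m - 3) ^ 2 < 0) :
    (0 < m → MonotoneOn (hermite xi xip fi fip di dip) (Set.Icc xi xip)) ∧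
    (m < 0 → AntitoneOn (hermite xi xip fi fip di dip) (Set.Icc xi xip)) := by
  set P := hermite xi xip fi fip di dip
  set a := di / m
  set b := dip / m
  set F : ℝ → ℝ := fun t =>
    a * (1 - (t - xi) / (xip - xi)) ^ 2 + b * ((t - xi) / (xip - xi)) ^ 2
      - 2 * (a + b - 3) * ((t - xi) / (xip - xi)) * (1 - (t - xi) / (xip - xi))
  have hP : ∀ t, HasDerivAt P (m * F t) t := fun t =>
    (hasDerivAt_hermite hx.ne' fi fip di dip t).congr_deriv (by
      rw [← hm]; simp only [F, a, b]; field_simp; ring)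
  have hF : ∀ t ∈ interior (Set.Icc xi xip), 0 ≤ F t := by
    rw [interior_Icc]
    rintro t ⟨ht₀, ht₁⟩
    have hh : 0 < xip - xi := sub_pos.2 hx
    exact fritschCarlson_form_nonneg hα0 hβ0 (div_nonneg (by linarith) hh.le)
      ((div_le_one hh).2 (by linarith)) hcond
  have hcont : ContinuousOn P (Set.Icc xi xip) := fun t _ =>
    (hP t).continuousAt.continuousWithinAt
  exact ⟨fun hpos => monotoneOn_of_hasDerivWithinAt_nonneg (convex_Icc xi xip) hcont
      (fun t _ => (hP t).hasDerivWithinAt) fun t ht => mul_nonneg hpos.le (hF t ht),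
    fun hneg => antitoneOn_of_hasDerivWithinAt_nonpos (convex_Icc xi xip) hcont
      (fun t _ => (hP t).hasDerivWithinAt)
      fun t ht => mul_nonpos_of_nonpos_of_nonneg hneg.le (hF t ht)⟩
end

section
/- Assume ĥ < 1, f is four times continuously differentiable on [x_1, x_n] with |f⁽⁴⁾(x)| ≤ L for all x, there exists K > 0 with ĥ/h_j ≤ K for all 1 ≤ j ≤ n − 1, and 3 − log₂(ĥ) < i_0 < (n − 1) + log₂(ĥ). Let f̃_{i_0} satisfy |f'(x_{i_0}) − f̃_{i_0}| ≤ T·ĥ^{p} with T, p > 0, and let ḟ_2, …, ḟ_{i_0−1} and ḟ_{i_0+1}, …, ḟ_{n−1} solve the modified (block-diagonal) system consisting of the left and right subsystems; set ḟ_{i_0} = f̃_{i_0}, ḟ_1 = f'(x_1), ḟ_n = f'(x_n). Then there exist a constant C depending only on K, L, T and integers l_0 = ⌊(i_0 − 2) + log₂(ĥ)⌋ + 1 < i_0 < l_1 = ⌈(i_0 + 2) − log₂(ĥ)⌉ − 1 such that |ḟ_i − f'(x_i)| ≤ C·ĥ^{min(3, p+1)} for 2 ≤ i ≤ l_0 and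 for l_1 ≤ i ≤ n − 1, and |ḟ_i − f'(x_i)| ≤ C·ĥ^{min(3, p)} for l_0 < i < l_1. Moreover, the piecewise cubic whose restriction to each [x_i, x_{i+1}] is the cubic Hermite interpolant of (f_i, ḟ_i), (f_{i+1}, ḟ_{i+1}) has matching second derivatives of its adjacent pieces at every interior knot x_j with j ≠ i_0, i.e. it is C² on [x_1, x_n] except possibly at x_{i_0}. -/
/-- Mesh spacing `hᵢ = xᵢ₊₁ − xᵢ`. -/
noncomputable def hstep (x : ℕ → ℝ) (i : ℕ) : ℝ := x (i + 1) - x i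

/-- Divided difference `mᵢ = (f(xᵢ₊₁) − f(xᵢ))/hᵢ`. -/
noncomputable def mslope (x : ℕ → ℝ) (f : ℝ → ℝ) (i : ℕ) : ℝ :=
  (f (x (i + 1)) - f (x i)) / (x (i + 1) - x i)

/-- `λᵢ = hᵢ₊₁/(hᵢ + hᵢ₊₁)`. -/
noncomputable def lamb (x : ℕ → ℝ) (i : ℕ) : ℝ :=
  hstep x (i + 1) / (hstep x i + hstep x (i + 1))

/-- `μᵢ = hᵢ/(hᵢ + hᵢ₊₁)`. -/
noncomputable def mub (x : ℕ → ℝ) (i : ℕ) : ℝ :=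
  hstep x i / (hstep x i + hstep x (i + 1))

/-
Subtracting the exact derivatives, the errors `eⱼ = ḟⱼ - f'(xⱼ)` satisfy the same tridiagonal
rows, with the consistency residual as right-hand side. The rows are exact for cubics, so Taylor
expansion at `xⱼ` bounds the residual by `L ĥ³`. Since every row has diagonal `2` and off-diagonal
weights `λ + μ = 1`, a discrete maximum principle gives `|eⱼ| ≤ L ĥ³ + T ĥᵖ 2^{-|j - i₀|}`: the
defect at the fixed knot `i₀` halves with each step and drops below `T ĥ^{p+1}` once
`|j - i₀| ≥ -log₂ ĥ`. The `C²` property at a knot `j ≠ i₀` is the `j`-th row itself, read through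
the second derivatives of the two Hermite pieces meeting there.
-/

open Set
open scoped Nat

/-- `taylor_mean_remainder_bound` expands about the left endpoint only; differentiating the Taylor
polynomial in its base point, as there, works for any base point `b` of the interval. -/
theorem norm_sub_taylorWithinEval_le {E : Type*} [NormedAddCommGroup E] [NormedSpace ℝ E]
    {f : ℝ → E} {A B C b x : ℝ} {n : ℕ} (hAB : A < B)
    (hf : ContDiffOn ℝ (n + 1) f (Icc A B)) (hb : b ∈ Icc A B) (hx : x ∈ Icc A B)
    (hC : ∀ y ∈ Icc A B, ‖iteratedDerivWithin (n + 1) f (Icc A B) y‖ ≤ C) :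
    ‖f x - taylorWithinEval f n (Icc A B) b x‖ ≤ C * |x - b| ^ (n + 1) / n ! := by
  have hseg : uIcc b x ⊆ Icc A B := ordConnected_Icc.uIcc_subset hb hx
  have hf' : DifferentiableOn ℝ (iteratedDerivWithin n f (Icc A B)) (Icc A B) :=
    hf.differentiableOn_iteratedDerivWithin (mod_cast n.lt_succ_self) (uniqueDiffOn_Icc hAB)
  have hderiv : ∀ y ∈ uIcc b x, HasDerivWithinAt (fun t => taylorWithinEval f n (Icc A B) t x)
      (((n ! : ℝ)⁻¹ * (x - y) ^ n) • iteratedDerivWithin (n + 1) f (Icc A B) y) (uIcc b x) y :=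
    fun y hy => (hasDerivWithinAt_taylorWithinEval_at_Icc x hAB (hseg hy) hf.of_succ hf').mono hseg
  have hbound : ∀ y ∈ uIcc b x,
      ‖((n ! : ℝ)⁻¹ * (x - y) ^ n) • iteratedDerivWithin (n + 1) f (Icc A B) y‖
        ≤ (n ! : ℝ)⁻¹ * |x - b| ^ n * C := by
    intro y hy
    rw [norm_smul, Real.norm_eq_abs, abs_mul, abs_pow, abs_inv, Nat.abs_cast]
    have := pow_le_pow_left₀ (abs_nonneg _) (abs_sub_right_of_mem_uIcc hy) n
    gcongr
    exact hC y (hseg hy)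
  have := Convex.norm_image_sub_le_of_norm_hasDerivWithin_le hderiv hbound
    (convex_uIcc b x) left_mem_uIcc right_mem_uIcc
  rw [taylorWithinEval_self, Real.norm_eq_abs] at this
  refine this.trans_eq ?_
  ring

/-- The left-hand side vanishes for cubics; expand `f` to order 3 and `f'` to order 2 about `b`. -/
theorem abs_three_mul_slope_sub_le {f : ℝ → ℝ} {A B L b t : ℝ} (hAB : A < B)
    (hf : ContDiffOn ℝ 4 f (Icc A B))
    (hL : ∀ y ∈ Icc A B, |iteratedDerivWithin 4 f (Icc A B) y| ≤ L)
    (hb : b ∈ Icc A B) (ht : t ∈ Icc A B) (htb : t ≠ b) :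
    |3 * ((f t - f b) / (t - b)) - derivWithin f (Icc A B) t - 2 * derivWithin f (Icc A B) b
        - iteratedDerivWithin 2 f (Icc A B) b * (t - b) / 2| ≤ L * |t - b| ^ 3 := by
  have hf' : ContDiffOn ℝ (2 + 1) (derivWithin f (Icc A B)) (Icc A B) :=
    hf.derivWithin (uniqueDiffOn_Icc hAB) (by norm_num)
  have hsucc : ∀ k, iteratedDerivWithin k (derivWithin f (Icc A B)) (Icc A B)
      = iteratedDerivWithin (k + 1) f (Icc A B) :=
    fun k => iteratedDerivWithin_succ'.symm
  have hρ := norm_sub_taylorWithinEval_le (n := 3) hAB hf hb ht hL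
  have hσ := norm_sub_taylorWithinEval_le (n := 2) hAB hf' hb ht fun y hy => by
    rw [hsucc, Real.norm_eq_abs]; exact hL y hy
  norm_num [taylor_within_apply, Finset.sum_range_succ, hsucc, Nat.factorial] at hρ hσ
  have htb' : t - b ≠ 0 := sub_ne_zero.2 htb
  have hremainder : ∀ ρ σ : ℝ, |ρ| ≤ L * |t - b| ^ 4 / 6 → |σ| ≤ L * |t - b| ^ 3 / 2 →
      |3 * ρ / (t - b) - σ| ≤ L * |t - b| ^ 3 := by
    intro ρ σ hρ hσ
    have hpos : 0 < |t - b| := abs_pos.2 htb'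
    calc |3 * ρ / (t - b) - σ| ≤ 3 * |ρ| / |t - b| + |σ| := by
          simpa [abs_div, abs_mul] using abs_sub (3 * ρ / (t - b)) σ
      _ ≤ 3 * (L * |t - b| ^ 4 / 6) / |t - b| + L * |t - b| ^ 3 / 2 := by gcongr
      _ = L * |t - b| ^ 3 := by field_simp; ring
  convert hremainder _ _ hρ hσ using 2
  field_simp
  ring

theorem deriv_deriv_hermite (xi xip fi fip di dip t : ℝ) :
    deriv (deriv (hermite xi xip fi fip di dip)) t =
      2 * (((fip - fi) / (xip - xi) - di) / (xip - xi))
        + ((dip + di - 2 * ((fip - fi) / (xip - xi))) / (xip - xi) ^ 2)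
            * (2 * (t - xip) + 4 * (t - xi)) := by
  have h : deriv (hermite xi xip fi fip di dip) = fun t =>
      di + 2 * (((fip - fi) / (xip - xi) - di) / (xip - xi)) * (t - xi)
        + ((dip + di - 2 * ((fip - fi) / (xip - xi))) / (xip - xi) ^ 2)
            * (2 * (t - xi) * (t - xip) + (t - xi) ^ 2) := by
    funext t
    unfold hermite
    simp (disch := fun_prop) only [deriv_fun_add, deriv_const', deriv_fun_mul, deriv_fun_sub,
      deriv_id'', deriv_fun_pow]
    ring
  rw [h]
  simp (disch := fun_prop) only [deriv_fun_add, deriv_const', deriv_fun_mul, deriv_fun_sub,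
      deriv_id'', deriv_fun_pow]
  ring

theorem two_mul_abs_le_add_max {l m u v w P : ℝ} (hl : 0 ≤ l) (hm : 0 ≤ m) (hlm : l + m = 1)
    (h : |l * u + 2 * v + m * w| ≤ P) : 2 * |v| ≤ P + max |u| |w| := by
  calc 2 * |v| = |(l * u + 2 * v + m * w) - l * u - m * w| := by
        rw [← abs_two, ← abs_mul]
        congr 1
        ring
    _ ≤ |l * u + 2 * v + m * w| + |l * u| + |m * w| :=
        (abs_sub _ _).trans (add_le_add_left (abs_sub _ _) _)
    _ = |l * u + 2 * v + m * w| + l * |u| + m * |w| := by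
        rw [abs_mul, abs_mul, abs_of_nonneg hl, abs_of_nonneg hm]
    _ ≤ P + l * max |u| |w| + m * max |u| |w| := by
        gcongr
        exacts [le_max_left _ _, le_max_right _ _]
    _ = P + max |u| |w| := by rw [add_assoc, ← add_mul, hlm, one_mul]

theorem half_pow_le_two_mul_half_pow {d d' : ℕ} (h : d ≤ d' + 1) :
    (1 / 2 : ℝ) ^ d' ≤ 2 * (1 / 2) ^ d := by
  calc (1 / 2 : ℝ) ^ d' = 2 * (1 / 2) ^ (d' + 1) := by rw [pow_succ]; ring
    _ ≤ 2 * (1 / 2) ^ d := by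
        gcongr 2 * ?_
        exact pow_le_pow_of_le_one (by norm_num) (by norm_num) h

theorem abs_le_add_mul_half_pow_of_two_mul_abs_le {e : ℕ → ℝ} {n i0 : ℕ} {P Q : ℝ}
    (hrow : ∀ j, 2 ≤ j → j ≤ n - 1 → j ≠ i0 → 2 * |e j| ≤ P + max |e (j - 1)| |e (j + 1)|)
    (h1 : |e 1| ≤ P) (hn : |e n| ≤ P) (hi0 : |e i0| ≤ Q) :
    ∀ j, 1 ≤ j → j ≤ n → |e j| ≤ P + Q * (1 / 2) ^ ((j : ℤ) - i0).natAbs := by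
  intro j hj1 hjn
  have hP : 0 ≤ P := (abs_nonneg _).trans h1
  have hQ : 0 ≤ Q := (abs_nonneg _).trans hi0
  set w : ℕ → ℝ := fun j => P + Q * (1 / 2) ^ ((j : ℤ) - i0).natAbs with hw
  have hwP : ∀ j, P ≤ w j := fun j => le_add_of_nonneg_right (by positivity)
  have hw_nbr : ∀ j k : ℕ, j ≤ k + 1 → k ≤ j + 1 →
      w k ≤ P + 2 * Q * (1 / 2) ^ ((j : ℤ) - i0).natAbs := fun j k h h' => by
    have := half_pow_le_two_mul_half_pow (d := ((j : ℤ) - i0).natAbs)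
      (d' := ((k : ℤ) - i0).natAbs) (by omega)
    simp only [hw]; nlinarith
  obtain ⟨m, hm, hmax⟩ := (Finset.Icc 1 n).exists_max_image (fun j => |e j| - w j)
    ⟨j, Finset.mem_Icc.2 ⟨hj1, hjn⟩⟩
  rw [Finset.mem_Icc] at hm
  suffices |e m| - w m ≤ 0 by linarith [hmax j (Finset.mem_Icc.2 ⟨hj1, hjn⟩)]
  by_cases hm1 : m = 1
  · subst hm1; linarith [hwP 1]
  by_cases hmn : m = n
  · subst hmn; linarith [hwP m]
  by_cases hmi0 : m = i0
  · subst hmi0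
    have hwm : w m = P + Q := by simp only [hw, sub_self, Int.natAbs_zero, pow_zero, mul_one]
    linarith
  have hleft := hmax (m - 1) (Finset.mem_Icc.2 ⟨by omega, by omega⟩)
  have hright := hmax (m + 1) (Finset.mem_Icc.2 ⟨by omega, by omega⟩)
  have hnbr : max |e (m - 1)| |e (m + 1)|
      ≤ P + 2 * Q * (1 / 2) ^ ((m : ℤ) - i0).natAbs + (|e m| - w m) :=
    max_le (by linarith [hw_nbr m (m - 1) (by omega) (by omega)])
      (by linarith [hw_nbr m (m + 1) (by omega) (by omega)])
  have hwm : w m = P + Q * (1 / 2) ^ ((m : ℤ) - i0).natAbs := rfl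
  linarith [hrow m (by omega) (by omega) hmi0]

theorem rpow_mul_half_pow_le_rpow_add_one {h p : ℝ} {i i0 : ℕ} (hh : 0 < h)
    (hd : -Real.logb 2 h ≤ |(i : ℝ) - i0|) :
    h ^ p * (1 / 2) ^ ((i : ℤ) - i0).natAbs ≤ h ^ (p + 1) := by
  rw [Real.rpow_add_one hh.ne']
  gcongr
  rw [← Real.logb_le_logb one_lt_two (by positivity) hh, Real.logb_pow, one_div, Real.logb_inv,
    Real.logb_self_eq_one one_lt_two, Nat.cast_natAbs, Int.cast_abs]
  push_cast
  linarith

theorem mul_pow_three_add_mul_le {h y A B q C : ℝ} (h0 : 0 < h) (h1 : h ≤ 1) (hy0 : 0 ≤ y)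
    (hy : y ≤ h ^ q) (hC : |A| + |B| ≤ C) : A * h ^ 3 + B * y ≤ C * h ^ min 3 q := by
  have h3 : h ^ 3 ≤ h ^ min 3 q := by
    rw [← Real.rpow_natCast]
    exact Real.rpow_le_rpow_of_exponent_ge h0 h1 (by norm_num)
  have hq : y ≤ h ^ min 3 q := hy.trans (Real.rpow_le_rpow_of_exponent_ge h0 h1 (min_le_right _ _))
  calc A * h ^ 3 + B * y ≤ |A| * h ^ min 3 q + |B| * h ^ min 3 q := by
        apply add_le_add
        · exact (mul_le_mul_of_nonneg_right (le_abs_self A) (by positivity)).trans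
            (mul_le_mul_of_nonneg_left h3 (abs_nonneg A))
        · exact (mul_le_mul_of_nonneg_right (le_abs_self B) hy0).trans
            (mul_le_mul_of_nonneg_left hq (abs_nonneg B))
    _ ≤ C * h ^ min 3 q := by
        rw [← add_mul]
        exact mul_le_mul_of_nonneg_right hC (Real.rpow_nonneg h0.le _)

theorem strictMonoOn_Icc_of_lt_add_one {x : ℕ → ℝ} {n : ℕ}
    (hx : ∀ i, 1 ≤ i → i ≤ n - 1 → x i < x (i + 1)) : StrictMonoOn x (Icc 1 n) :=
  strictMonoOn_of_lt_add_one ordConnected_Icc fun i _ hi hi' => hx i hi.1 (by grind)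

theorem lamb_add_mub {x : ℕ → ℝ} {i : ℕ} (h : hstep x i + hstep x (i + 1) ≠ 0) :
    lamb x i + mub x i = 1 := by
  rw [lamb, mub, ← add_div, add_comm, div_self h]

theorem lamb_nonneg {x : ℕ → ℝ} {i : ℕ} (h1 : x i ≤ x (i + 1)) (h2 : x (i + 1) ≤ x (i + 1 + 1)) :
    0 ≤ lamb x i :=
  div_nonneg (sub_nonneg.2 h2) (add_nonneg (sub_nonneg.2 h1) (sub_nonneg.2 h2))

theorem mub_nonneg {x : ℕ → ℝ} {i : ℕ} (h1 : x i ≤ x (i + 1)) (h2 : x (i + 1) ≤ x (i + 1 + 1)) :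
    0 ≤ mub x i :=
  div_nonneg (sub_nonneg.2 h1) (add_nonneg (sub_nonneg.2 h1) (sub_nonneg.2 h2))

theorem deriv_deriv_hermite_eq_of_row {x : ℕ → ℝ} {f : ℝ → ℝ} {d : ℕ → ℝ} {i : ℕ}
    (h1 : x i < x (i + 1)) (h2 : x (i + 1) < x (i + 1 + 1))
    (hrow : lamb x i * d i + 2 * d (i + 1) + mub x i * d (i + 1 + 1)
      = 3 * (lamb x i * mslope x f i + mub x i * mslope x f (i + 1))) :
    deriv (deriv (hermite (x i) (x (i + 1)) (f (x i)) (f (x (i + 1))) (d i) (d (i + 1))))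
        (x (i + 1))
      = deriv (deriv (hermite (x (i + 1)) (x (i + 1 + 1)) (f (x (i + 1))) (f (x (i + 1 + 1)))
          (d (i + 1)) (d (i + 1 + 1)))) (x (i + 1)) := by
  have ha : x (i + 1) - x i ≠ 0 := (sub_pos.2 h1).ne'
  have hc : x (i + 1 + 1) - x (i + 1) ≠ 0 := (sub_pos.2 h2).ne'
  have hac : x (i + 1) - x i + (x (i + 1 + 1) - x (i + 1)) ≠ 0 := by linarith
  simp only [lamb, mub, mslope, hstep] at hrow
  rw [deriv_deriv_hermite, deriv_deriv_hermite]
  field_simp at hrow ⊢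
  linear_combination (2 * (x (i + 1) - x i) * (x (i + 1 + 1) - x (i + 1))) * hrow

theorem abs_row_residual_le {x : ℕ → ℝ} {f : ℝ → ℝ} {A B L hhat : ℝ} {i : ℕ} (hAB : A < B)
    (hf : ContDiffOn ℝ 4 f (Icc A B))
    (hL : ∀ y ∈ Icc A B, |iteratedDerivWithin 4 f (Icc A B) y| ≤ L)
    (h1 : x i < x (i + 1)) (h2 : x (i + 1) < x (i + 1 + 1))
    (ha : x i ∈ Icc A B) (hc : x (i + 1 + 1) ∈ Icc A B)
    (hh1 : hstep x i ≤ hhat) (hh2 : hstep x (i + 1) ≤ hhat) :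
    |3 * (lamb x i * mslope x f i + mub x i * mslope x f (i + 1))
      - (lamb x i * derivWithin f (Icc A B) (x i) + 2 * derivWithin f (Icc A B) (x (i + 1))
        + mub x i * derivWithin f (Icc A B) (x (i + 1 + 1)))| ≤ L * hhat ^ 3 := by
  have hb : x (i + 1) ∈ Icc A B := ⟨ha.1.trans h1.le, h2.le.trans hc.2⟩
  have hEa := abs_three_mul_slope_sub_le hAB hf hL hb ha h1.ne
  have hEc := abs_three_mul_slope_sub_le hAB hf hL hb hc h2.ne'
  rw [abs_sub_comm (x i), abs_of_pos (sub_pos.2 h1)] at hEa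
  rw [abs_of_pos (sub_pos.2 h2)] at hEc
  have hL0 : 0 ≤ L := (abs_nonneg _).trans (hL _ hb)
  have hab : x (i + 1) - x i ≠ 0 := (sub_pos.2 h1).ne'
  have hbc : x (i + 1 + 1) - x (i + 1) ≠ 0 := (sub_pos.2 h2).ne'
  have hac : x (i + 1) - x i + (x (i + 1 + 1) - x (i + 1)) ≠ 0 := by linarith
  have hlam := lamb_nonneg h1.le h2.le
  have hmu := mub_nonneg h1.le h2.le
  -- the `f''` terms cancel because `λᵢ (xᵢ - xᵢ₊₁) + μᵢ (xᵢ₊₂ - xᵢ₊₁) = 0`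
  calc _ = |lamb x i * (3 * ((f (x i) - f (x (i + 1))) / (x i - x (i + 1)))
            - derivWithin f (Icc A B) (x i) - 2 * derivWithin f (Icc A B) (x (i + 1))
            - iteratedDerivWithin 2 f (Icc A B) (x (i + 1)) * (x i - x (i + 1)) / 2)
        + mub x i * (3 * ((f (x (i + 1 + 1)) - f (x (i + 1))) / (x (i + 1 + 1) - x (i + 1)))
            - derivWithin f (Icc A B) (x (i + 1 + 1)) - 2 * derivWithin f (Icc A B) (x (i + 1))
            - iteratedDerivWithin 2 f (Icc A B) (x (i + 1)) * (x (i + 1 + 1) - x (i + 1)) / 2)| :=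
      by
        congr 1
        have ha' : x i - x (i + 1) ≠ 0 := (sub_neg.2 h1).ne
        simp only [lamb, mub, mslope, hstep]
        field_simp
        ring
    _ ≤ lamb x i * (L * hhat ^ 3) + mub x i * (L * hhat ^ 3) := by
        refine (abs_add_le _ _).trans ?_
        rw [abs_mul, abs_mul, abs_of_nonneg hlam, abs_of_nonneg hmu]
        gcongr
        · exact hEa.trans (by gcongr; exact hh1)
        · exact hEc.trans (by gcongr; exact hh2)
    _ = L * hhat ^ 3 := by
        rw [← add_mul, lamb_add_mub hac, one_mul]

theorem abs_sub_derivWithin_le_of_rows {n i0 : ℕ} {x : ℕ → ℝ} {f : ℝ → ℝ} {df : ℕ → ℝ}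
    {L Q hhat : ℝ} (hn : 1 < n) (hx : ∀ i, 1 ≤ i → i ≤ n - 1 → x i < x (i + 1))
    (hh : ∀ i, 1 ≤ i → i ≤ n - 1 → hstep x i ≤ hhat)
    (hf : ContDiffOn ℝ 4 f (Icc (x 1) (x n)))
    (hL : ∀ t ∈ Icc (x 1) (x n), |iteratedDerivWithin 4 f (Icc (x 1) (x n)) t| ≤ L)
    (hdf1 : df 1 = derivWithin f (Icc (x 1) (x n)) (x 1))
    (hdfn : df n = derivWithin f (Icc (x 1) (x n)) (x n))
    (hdfi0 : |df i0 - derivWithin f (Icc (x 1) (x n)) (x i0)| ≤ Q)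
    (hrow : ∀ j, 2 ≤ j → j ≤ n - 1 → j ≠ i0 →
      lamb x (j - 1) * df (j - 1) + 2 * df j + mub x (j - 1) * df (j + 1)
        = 3 * (lamb x (j - 1) * mslope x f (j - 1) + mub x (j - 1) * mslope x f j)) :
    ∀ j, 1 ≤ j → j ≤ n → |df j - derivWithin f (Icc (x 1) (x n)) (x j)|
      ≤ L * hhat ^ 3 + Q * (1 / 2) ^ ((j : ℤ) - i0).natAbs := by
  have hmono := strictMonoOn_Icc_of_lt_add_one hx
  have hmem : ∀ i, 1 ≤ i → i ≤ n → x i ∈ Icc (x 1) (x n) := fun i h1 h2 =>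
    ⟨hmono.monotoneOn ⟨le_rfl, hn.le⟩ ⟨h1, h2⟩ h1, hmono.monotoneOn ⟨h1, h2⟩ ⟨hn.le, le_rfl⟩ h2⟩
  have hAB : x 1 < x n := hmono ⟨le_rfl, hn.le⟩ ⟨hn.le, le_rfl⟩ hn
  have hP : 0 ≤ L * hhat ^ 3 := by
    have hL0 : 0 ≤ L := (abs_nonneg _).trans (hL _ (hmem 1 le_rfl hn.le))
    have hhat0 : 0 ≤ hhat := (sub_pos.2 (hx 1 le_rfl (by omega))).le.trans (hh 1 le_rfl (by omega))
    positivity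
  refine abs_le_add_mul_half_pow_of_two_mul_abs_le
    (e := fun j => df j - derivWithin f (Icc (x 1) (x n)) (x j)) (fun j hj2 hjn hji0 => ?_)
    (by simpa [hdf1] using hP) (by simpa [hdfn] using hP) hdfi0
  obtain ⟨i, rfl⟩ : ∃ i, j = i + 1 := ⟨j - 1, by omega⟩
  have h1 : x i < x (i + 1) := hx i (by omega) (by omega)
  have h2 : x (i + 1) < x (i + 1 + 1) := hx (i + 1) (by omega) hjn
  have hr := hrow (i + 1) hj2 hjn hji0
  simp only [Nat.add_sub_cancel] at hr ⊢
  refine two_mul_abs_le_add_max (lamb_nonneg h1.le h2.le) (mub_nonneg h1.le h2.le)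
    (lamb_add_mub (by simp only [hstep]; linarith)) ?_
  have := abs_row_residual_le hAB hf hL h1 h2 (hmem i (by omega) (by omega))
    (hmem (i + 1 + 1) (by omega) (by omega)) (hh i (by omega) (by omega))
    (hh (i + 1) (by omega) hjn)
  convert this using 2
  linear_combination hr

theorem monotone_spline_max_regularity_general (K L T : ℝ) :
    ∃ C > 0, ∀ (p : ℝ), 0 < p →
      ∀ (n i0 : ℕ) (x : ℕ → ℝ) (f : ℝ → ℝ) (ftil hhat : ℝ) (df : ℕ → ℝ),
      2 ≤ i0 → i0 ≤ n - 1 →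
      (∀ i, 1 ≤ i → i ≤ n - 1 → x i < x (i + 1)) →
      hhat < 1 →
      (∀ i, 1 ≤ i → i ≤ n - 1 → hstep x i ≤ hhat) →
      (∃ i, 1 ≤ i ∧ i ≤ n - 1 ∧ hhat = hstep x i) →
      ContDiffOn ℝ 4 f (Set.Icc (x 1) (x n)) →
      (∀ t ∈ Set.Icc (x 1) (x n),
        |iteratedDerivWithin 4 f (Set.Icc (x 1) (x n)) t| ≤ L) →
      (∀ j, 1 ≤ j → j ≤ n - 1 → hhat / hstep x j ≤ K) →
      ((3 : ℝ) - Real.logb 2 hhat < (i0 : ℝ)) →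
      ((i0 : ℝ) < (n : ℝ) - 1 + Real.logb 2 hhat) →
      |derivWithin f (Set.Icc (x 1) (x n)) (x i0) - ftil| ≤ T * hhat ^ p →
      df 1 = derivWithin f (Set.Icc (x 1) (x n)) (x 1) →
      df n = derivWithin f (Set.Icc (x 1) (x n)) (x n) →
      df i0 = ftil →
      (∀ j, 2 ≤ j → j ≤ n - 1 → j ≠ i0 →
        lamb x (j - 1) * df (j - 1) + 2 * df j + mub x (j - 1) * df (j + 1)
          = 3 * (lamb x (j - 1) * mslope x f (j - 1) + mub x (j - 1) * mslope x f j)) →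
      ((⌊(i0 : ℝ) - 2 + Real.logb 2 hhat⌋ + 1 < (i0 : ℤ) ∧
          (i0 : ℤ) < ⌈(i0 : ℝ) + 2 - Real.logb 2 hhat⌉ - 1) ∧
        (∀ i : ℕ, 2 ≤ i → (i : ℤ) ≤ ⌊(i0 : ℝ) - 2 + Real.logb 2 hhat⌋ + 1 →
          |df i - derivWithin f (Set.Icc (x 1) (x n)) (x i)|
            ≤ C * hhat ^ (min 3 (p + 1))) ∧
        (∀ i : ℕ, ⌈(i0 : ℝ) + 2 - Real.logb 2 hhat⌉ - 1 ≤ (i : ℤ) → i ≤ n - 1 →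
          |df i - derivWithin f (Set.Icc (x 1) (x n)) (x i)|
            ≤ C * hhat ^ (min 3 (p + 1))) ∧
        (∀ i : ℕ, ⌊(i0 : ℝ) - 2 + Real.logb 2 hhat⌋ + 1 < (i : ℤ) →
          (i : ℤ) < ⌈(i0 : ℝ) + 2 - Real.logb 2 hhat⌉ - 1 →
          |df i - derivWithin f (Set.Icc (x 1) (x n)) (x i)|
            ≤ C * hhat ^ (min 3 p)) ∧
        (∀ j, 2 ≤ j → j ≤ n - 1 → j ≠ i0 →
          deriv (deriv (hermite (x (j - 1)) (x j) (f (x (j - 1))) (f (x j))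
              (df (j - 1)) (df j))) (x j)
            = deriv (deriv (hermite (x j) (x (j + 1)) (f (x j)) (f (x (j + 1)))
                (df j) (df (j + 1)))) (x j))) := by
  refine ⟨|L| + |T| + 1, by positivity, fun p _ n i0 x f ftil hhat df hi0 hi0n hx hhat1 hh _ hf hL _
    hlog hlog' hftil hdf1 hdfn hdfi0 hrow => ?_⟩
  have hhat0 : 0 < hhat := (sub_pos.2 (hx 1 le_rfl (by omega))).trans_le (hh 1 le_rfl (by omega))
  have hlog0 : Real.logb 2 hhat < 0 := Real.logb_neg one_lt_two hhat0 hhat1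
  have herr := abs_sub_derivWithin_le_of_rows (Q := T * hhat ^ p) (by omega) hx hh hf hL hdf1 hdfn
    (by rwa [hdfi0, abs_sub_comm]) hrow
  have hbound : ∀ i (q : ℝ), 1 ≤ i → i ≤ n →
      hhat ^ p * (1 / 2) ^ ((i : ℤ) - i0).natAbs ≤ hhat ^ q →
      |df i - derivWithin f (Icc (x 1) (x n)) (x i)| ≤ (|L| + |T| + 1) * hhat ^ min 3 q :=
    fun i q h1 h2 hq => (herr i h1 h2).trans <| by
      rw [mul_assoc]
      exact mul_pow_three_add_mul_le hhat0 hhat1.le (by positivity) hq (by simp)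
  simp only [← Int.floor_add_one, ← Int.ceil_sub_one, Int.le_floor, Int.ceil_le, Int.floor_lt,
    Int.lt_ceil]
  push_cast
  refine ⟨⟨by linarith, by linarith⟩, fun i hi2 hil => ?_, fun i hil hin => ?_,
    fun i hil hir => ?_, fun j hj2 hjn hji0 => ?_⟩
  · have : i < i0 := by exact_mod_cast (by linarith : (i : ℝ) < i0)
    exact hbound i _ (by omega) (by omega)
      (rpow_mul_half_pow_le_rpow_add_one hhat0 (le_abs.2 (Or.inr (by linarith))))
  · have : i0 < i := by exact_mod_cast (by linarith : (i0 : ℝ) < i)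
    exact hbound i _ (by omega) (by omega)
      (rpow_mul_half_pow_le_rpow_add_one hhat0 (le_abs.2 (Or.inl (by linarith))))
  · have h1 : 1 < i := by exact_mod_cast (by linarith : (1 : ℝ) < i)
    have h2 : i < n := by exact_mod_cast (by linarith : (i : ℝ) < n)
    exact hbound i p h1.le h2.le
      (mul_le_of_le_one_right (by positivity) (pow_le_one₀ (by norm_num) (by norm_num)))
  · obtain ⟨i, rfl⟩ : ∃ i, j = i + 1 := ⟨j - 1, by omega⟩
    simpa only [Nat.add_sub_cancel] using deriv_deriv_hermite_eq_of_row
      (hx i (by omega) (by omega)) (hx (i + 1) (by omega) hjn)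
      (by simpa only [Nat.add_sub_cancel] using hrow (i + 1) hj2 hjn hji0)

/-- Monotone spline with maximum regularity: solving the modified
block-diagonal system (left and right subsystems, `ḟᵢ₀ = f̃ᵢ₀` fixed),
written row-wise as `λⱼ₋₁ḟⱼ₋₁ + 2ḟⱼ + μⱼ₋₁ḟⱼ₊₁ = 3(λⱼ₋₁mⱼ₋₁ + μⱼ₋₁mⱼ)` for
`2 ≤ j ≤ n−1`, `j ≠ i₀`, yields a constant `C = C(K, L, T)` and integers
`l₀ < i₀ < l₁` with errors `C·ĥ^{min(3,p+1)}` for `2 ≤ i ≤ l₀` and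
`l₁ ≤ i ≤ n−1`, and `C·ĥ^{min(3,p)}` for `l₀ < i < l₁`; moreover, the
resulting piecewise cubic is `C²` at every interior knot `xⱼ`, `j ≠ i₀`. -/
theorem monotone_spline_max_regularity (K L T : ℝ) (hK : 0 < K) (hT : 0 < T) :
    ∃ C > 0, ∀ (p : ℝ), 0 < p →
      ∀ (n i0 : ℕ) (x : ℕ → ℝ) (f : ℝ → ℝ) (ftil hhat : ℝ) (df : ℕ → ℝ),
      2 ≤ i0 → i0 ≤ n - 1 →
      (∀ i, 1 ≤ i → i ≤ n - 1 → x i < x (i + 1)) →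
      hhat < 1 →
      (∀ i, 1 ≤ i → i ≤ n - 1 → hstep x i ≤ hhat) →
      (∃ i, 1 ≤ i ∧ i ≤ n - 1 ∧ hhat = hstep x i) →
      ContDiffOn ℝ 4 f (Set.Icc (x 1) (x n)) →
      (∀ t ∈ Set.Icc (x 1) (x n),
        |iteratedDerivWithin 4 f (Set.Icc (x 1) (x n)) t| ≤ L) →
      (∀ j, 1 ≤ j → j ≤ n - 1 → hhat / hstep x j ≤ K) →
      ((3 : ℝ) - Real.logb 2 hhat < (i0 : ℝ)) →
      ((i0 : ℝ) < (n : ℝ) - 1 + Real.logb 2 hhat) →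
      |derivWithin f (Set.Icc (x 1) (x n)) (x i0) - ftil| ≤ T * hhat ^ p →
      df 1 = derivWithin f (Set.Icc (x 1) (x n)) (x 1) →
      df n = derivWithin f (Set.Icc (x 1) (x n)) (x n) →
      df i0 = ftil →
      (∀ j, 2 ≤ j → j ≤ n - 1 → j ≠ i0 →
        lamb x (j - 1) * df (j - 1) + 2 * df j + mub x (j - 1) * df (j + 1)
          = 3 * (lamb x (j - 1) * mslope x f (j - 1) + mub x (j - 1) * mslope x f j)) →
      ((⌊(i0 : ℝ) - 2 + Real.logb 2 hhat⌋ + 1 < (i0 : ℤ) ∧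
          (i0 : ℤ) < ⌈(i0 : ℝ) + 2 - Real.logb 2 hhat⌉ - 1) ∧
        (∀ i : ℕ, 2 ≤ i → (i : ℤ) ≤ ⌊(i0 : ℝ) - 2 + Real.logb 2 hhat⌋ + 1 →
          |df i - derivWithin f (Set.Icc (x 1) (x n)) (x i)|
            ≤ C * hhat ^ (min 3 (p + 1))) ∧
        (∀ i : ℕ, ⌈(i0 : ℝ) + 2 - Real.logb 2 hhat⌉ - 1 ≤ (i : ℤ) → i ≤ n - 1 →
          |df i - derivWithin f (Set.Icc (x 1) (x n)) (x i)|
            ≤ C * hhat ^ (min 3 (p + 1))) ∧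
        (∀ i : ℕ, ⌊(i0 : ℝ) - 2 + Real.logb 2 hhat⌋ + 1 < (i : ℤ) →
          (i : ℤ) < ⌈(i0 : ℝ) + 2 - Real.logb 2 hhat⌉ - 1 →
          |df i - derivWithin f (Set.Icc (x 1) (x n)) (x i)|
            ≤ C * hhat ^ (min 3 p)) ∧
        (∀ j, 2 ≤ j → j ≤ n - 1 → j ≠ i0 →
          deriv (deriv (hermite (x (j - 1)) (x j) (f (x (j - 1))) (f (x j))
              (df (j - 1)) (df j))) (x j)
            = deriv (deriv (hermite (x j) (x (j + 1)) (f (x j)) (f (x (j + 1)))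
                (df j) (df (j + 1)))) (x j))) :=
  monotone_spline_max_regularity_general K L T
end
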